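/- arXiv:2401.12482 — 2 statements merged into one kernel-verified Lean document; each statement's English description precedes it below -/
import Mathlib

section
/- For all real numbers A and δ with 0 < δ ≤ A, the entropy integral satisfies ∫_0^δ √(log(A/u)) du ≤ δ·( √(log(A/δ)) + √π ). -/
open MeasureTheory Real

lemma sqrt_add_le' {a b : ℝ} (ha : 0 ≤ a) (hb : 0 ≤ b) :
    Real.sqrt (a + b) ≤ Real.sqrt a + Real.sqrt b := by
  have h1 := Real.sq_sqrt ha
  have h2 := Real.sq_sqrt hb
  have h3 := Real.sqrt_nonneg a
  have h4 := Real.sqrt_nonneg b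
  have h : a + b ≤ (Real.sqrt a + Real.sqrt b) ^ 2 := by nlinarith [mul_nonneg h3 h4]
  calc Real.sqrt (a + b) ≤ Real.sqrt ((Real.sqrt a + Real.sqrt b) ^ 2) := Real.sqrt_le_sqrt h
    _ = Real.sqrt a + Real.sqrt b := Real.sqrt_sq (by positivity)

/-- `log x ≤ x / e` for `x > 0`. -/
lemma log_le_div_exp {x : ℝ} (hx : 0 < x) : Real.log x ≤ x / Real.exp 1 := by
  have h : Real.log (x / Real.exp 1) ≤ x / Real.exp 1 - 1 :=
    Real.log_le_sub_one_of_pos (by positivity)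
  rw [Real.log_div hx.ne' (Real.exp_ne_zero 1), Real.log_exp] at h
  linarith

/-- For all real numbers `A` and `δ` with `0 < δ ≤ A`, the entropy
integral satisfies `∫_0^δ √(log(A/u)) du ≤ δ (√(log(A/δ)) + √π)`. -/
theorem entropy_integral_bound (A δ : ℝ) (hδ : 0 < δ) (hδA : δ ≤ A) :
    ∫ u in Set.Ioc (0 : ℝ) δ, Real.sqrt (Real.log (A / u)) ≤
      δ * (Real.sqrt (Real.log (A / δ)) + Real.sqrt Real.pi) := by
  have hA : 0 < A := lt_of_lt_of_le hδ hδA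
  set C : ℝ := Real.sqrt (Real.log (A / δ)) with hC
  set D : ℝ := Real.sqrt (δ / Real.exp 1) with hD
  have hCnn : 0 ≤ C := Real.sqrt_nonneg _
  have hDnn : 0 ≤ D := Real.sqrt_nonneg _
  set g : ℝ → ℝ := fun u => C + D * u ^ (-(1/2) : ℝ) with hg
  -- pointwise bound on Ioc 0 δ
  have key : ∀ u ∈ Set.Ioc (0 : ℝ) δ, Real.sqrt (Real.log (A / u)) ≤ g u := by
    intro u hu
    obtain ⟨hu0, huδ⟩ := hu
    have hlog_split : Real.log (A / u) = Real.log (A / δ) + Real.log (δ / u) := by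
      rw [Real.log_div hA.ne' hu0.ne', Real.log_div hA.ne' hδ.ne',
        Real.log_div hδ.ne' hu0.ne']
      ring
    have h1 : 0 ≤ Real.log (A / δ) := Real.log_nonneg (by rw [le_div_iff₀ hδ]; linarith)
    have h2 : 0 ≤ Real.log (δ / u) := Real.log_nonneg (by rw [le_div_iff₀ hu0]; linarith)
    have hsplit : Real.sqrt (Real.log (A / u)) ≤ C + Real.sqrt (Real.log (δ / u)) := by
      rw [hlog_split]; exact sqrt_add_le' h1 h2
    have hb : Real.sqrt (Real.log (δ / u)) ≤ D * u ^ (-(1/2) : ℝ) := by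
      have hle : Real.log (δ / u) ≤ (δ / Real.exp 1) / u := by
        have h := log_le_div_exp (show (0:ℝ) < δ / u by positivity)
        calc Real.log (δ / u) ≤ (δ / u) / Real.exp 1 := h
          _ = (δ / Real.exp 1) / u := by ring
      calc Real.sqrt (Real.log (δ / u)) ≤ Real.sqrt ((δ / Real.exp 1) / u) :=
            Real.sqrt_le_sqrt hle
        _ = D / Real.sqrt u := by rw [Real.sqrt_div (by positivity)]
        _ = D * u ^ (-(1/2) : ℝ) := by
            rw [Real.rpow_neg hu0.le, ← Real.sqrt_eq_rpow, div_eq_mul_inv]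
    calc Real.sqrt (Real.log (A / u)) ≤ C + Real.sqrt (Real.log (δ / u)) := hsplit
      _ ≤ C + D * u ^ (-(1/2) : ℝ) := by linarith
  -- integrability of g on Ioc 0 δ
  have hrpow : IntervalIntegrable (fun u : ℝ => u ^ (-(1/2) : ℝ)) volume 0 δ :=
    intervalIntegral.intervalIntegrable_rpow' (by norm_num)
  have hg_int : IntegrableOn g (Set.Ioc (0:ℝ) δ) volume := by
    apply Integrable.add
    · exact integrableOn_const measure_Ioc_lt_top.ne
    · exact (hrpow.const_mul D).1
  -- integrability of f
  have hf_meas : AEStronglyMeasurable (fun u : ℝ => Real.sqrt (Real.log (A / u)))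
      (volume.restrict (Set.Ioc (0:ℝ) δ)) := by
    apply Measurable.aestronglyMeasurable
    exact (Real.measurable_log.comp (measurable_const.div measurable_id)).sqrt
  have hf_int : IntegrableOn (fun u : ℝ => Real.sqrt (Real.log (A / u)))
      (Set.Ioc (0:ℝ) δ) volume := by
    apply Integrable.mono' hg_int hf_meas
    rw [ae_restrict_iff' measurableSet_Ioc]
    filter_upwards with u hu
    rw [Real.norm_eq_abs, abs_of_nonneg (Real.sqrt_nonneg _)]
    exact key u hu
  have hmono := setIntegral_mono_on hf_int hg_int measurableSet_Ioc key
  -- compute ∫ g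
  have hI : ∫ u in Set.Ioc (0:ℝ) δ, g u = δ * C + D * (2 * Real.sqrt δ) := by
    rw [← intervalIntegral.integral_of_le hδ.le]
    rw [hg]
    rw [intervalIntegral.integral_add intervalIntegrable_const (hrpow.const_mul D),
      intervalIntegral.integral_const, intervalIntegral.integral_const_mul,
      integral_rpow (Or.inl (by norm_num))]
    rw [Real.zero_rpow (by norm_num)]
    norm_num
    rw [← Real.sqrt_eq_rpow]
    ring
    exact Or.inl trivial
  rw [hI] at hmono
  -- final numeric bound: D * (2 * √δ) ≤ δ * √π
  have hfin : D * (2 * Real.sqrt δ) ≤ δ * Real.sqrt Real.pi := by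
    have hDδ : D * Real.sqrt δ = δ / Real.sqrt (Real.exp 1) := by
      rw [hD, ← Real.sqrt_mul (by positivity)]
      rw [show δ / Real.exp 1 * δ = δ ^ 2 / Real.exp 1 by ring,
        Real.sqrt_div (by positivity), Real.sqrt_sq hδ.le]
    have he2 : (2:ℝ) ≤ Real.exp 1 := by
      have := Real.add_one_le_exp 1; linarith
    have hsqrt_e : Real.sqrt 2 ≤ Real.sqrt (Real.exp 1) := Real.sqrt_le_sqrt he2
    have hsqrt2 : (1:ℝ) ≤ Real.sqrt 2 := by
      rw [show (1:ℝ) = Real.sqrt 1 by simp]; exact Real.sqrt_le_sqrt (by norm_num)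
    have hpi : Real.sqrt 2 ≤ Real.sqrt Real.pi :=
      Real.sqrt_le_sqrt (by nlinarith [Real.pi_gt_three])
    have h2e : 2 / Real.sqrt (Real.exp 1) ≤ Real.sqrt Real.pi := by
      have hepos : 0 < Real.sqrt (Real.exp 1) := lt_of_lt_of_le (by linarith) hsqrt_e
      rw [div_le_iff₀ hepos]
      have h2 : (2:ℝ) = Real.sqrt 2 * Real.sqrt 2 :=
        (Real.mul_self_sqrt (by norm_num : (0:ℝ) ≤ 2)).symm
      calc (2:ℝ) = Real.sqrt 2 * Real.sqrt 2 := h2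
        _ ≤ Real.sqrt Real.pi * Real.sqrt (Real.exp 1) :=
          mul_le_mul hpi hsqrt_e (by linarith) (Real.sqrt_nonneg _)
    calc D * (2 * Real.sqrt δ) = 2 * (D * Real.sqrt δ) := by ring
      _ = 2 * (δ / Real.sqrt (Real.exp 1)) := by rw [hDδ]
      _ = δ * (2 / Real.sqrt (Real.exp 1)) := by ring
      _ ≤ δ * Real.sqrt Real.pi := by
        apply mul_le_mul_of_nonneg_left h2e hδ.le
  calc ∫ u in Set.Ioc (0:ℝ) δ, Real.sqrt (Real.log (A / u)) ≤ δ * C + D * (2 * Real.sqrt δ) :=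
        hmono
    _ ≤ δ * C + δ * Real.sqrt Real.pi := by linarith
    _ = δ * (C + Real.sqrt Real.pi) := by ring
end

section
/- For every Γ > 0 and every real x ≥ −Γ, it holds that 2(e^{|x|} − 1 − |x|) ≤ c_Γ²·(e^x − 1)², where c_Γ = 2(e^Γ − 1 − Γ)/(e^{−Γ} − 1)². -/
open Real Set

lemma aux_psi_nonneg {t : ℝ} (ht : 0 ≤ t) : 0 ≤ (t - 2) * Real.exp t + t + 2 := by
  have hderiv : ∀ s : ℝ, HasDerivAt (fun s : ℝ => (s - 2) * Real.exp s + s + 2)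
      (1 * Real.exp s + (s - 2) * Real.exp s + 1) s := by
    intro s
    have h := ((((hasDerivAt_id s).sub_const 2).mul (Real.hasDerivAt_exp s)).add
      (hasDerivAt_id s)).add_const 2
    simpa using h
  have hmono : Monotone (fun s : ℝ => (s - 2) * Real.exp s + s + 2) := by
    apply monotone_of_deriv_nonneg
    · exact fun s => (hderiv s).differentiableAt
    · intro s
      rw [(hderiv s).deriv]
      have h1 : 1 - s ≤ Real.exp (-s) := by linarith [Real.add_one_le_exp (-s)]
      have h2 : (1 - s) * Real.exp s ≤ Real.exp (-s) * Real.exp s :=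
        mul_le_mul_of_nonneg_right h1 (Real.exp_nonneg s)
      rw [← Real.exp_add] at h2
      simp at h2
      nlinarith [Real.exp_pos s]
  have := hmono ht
  simpa using this

lemma aux_sq_bound {x : ℝ} (hx : 0 ≤ x) :
    2 * (Real.exp x - 1 - x) ≤ (Real.exp x - 1) ^ 2 := by
  have hderiv : ∀ s : ℝ, HasDerivAt (fun s : ℝ => Real.exp (2 * s) - 4 * Real.exp s + 3 + 2 * s)
      (Real.exp (2 * s) * 2 - 4 * Real.exp s + 2 * 1) s := by
    intro s
    have h1 : HasDerivAt (fun s : ℝ => Real.exp (2 * s)) (Real.exp (2 * s) * 2) s := by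
      simpa using (HasDerivAt.exp ((hasDerivAt_id s).const_mul 2))
    have h2 : HasDerivAt (fun s : ℝ => 4 * Real.exp s) (4 * Real.exp s) s :=
      (Real.hasDerivAt_exp s).const_mul 4
    have h := ((h1.sub h2).add_const 3).add ((hasDerivAt_id s).const_mul 2)
    exact h
  have hmono : Monotone (fun s : ℝ => Real.exp (2 * s) - 4 * Real.exp s + 3 + 2 * s) := by
    apply monotone_of_deriv_nonneg
    · exact fun s => (hderiv s).differentiableAt
    · intro s
      rw [(hderiv s).deriv]
      have h : Real.exp (2 * s) = Real.exp s * Real.exp s := by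
        rw [← Real.exp_add]; ring_nf
      nlinarith [sq_nonneg (Real.exp s - 1)]
  have h0 := hmono hx
  simp only [mul_zero, Real.exp_zero] at h0
  have h : Real.exp (2 * x) = Real.exp x * Real.exp x := by rw [← Real.exp_add]; ring_nf
  nlinarith [h0, h]

lemma aux_ratio_le {t Γ : ℝ} (ht : 0 < t) (htΓ : t ≤ Γ) :
    (Real.exp t - 1 - t) * Γ ^ 2 ≤ (Real.exp Γ - 1 - Γ) * t ^ 2 := by
  have hΓ : 0 < Γ := ht.trans_le htΓ
  have hderiv : ∀ s : ℝ, s ∈ interior (Set.Ioi (0:ℝ)) →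
      HasDerivAt (fun s : ℝ => (Real.exp s - 1 - s) / s ^ 2)
        (((Real.exp s - 1) * s ^ 2 - (Real.exp s - 1 - s) * (2 * s)) / (s ^ 2) ^ 2) s := by
    intro s hs
    rw [interior_Ioi, Set.mem_Ioi] at hs
    have hnum : HasDerivAt (fun s : ℝ => Real.exp s - 1 - s) (Real.exp s - 1) s := by
      have h := ((Real.hasDerivAt_exp s).sub_const 1).sub (hasDerivAt_id s)
      exact h
    have hden : HasDerivAt (fun s : ℝ => s ^ 2) (2 * s) s := by
      have h := hasDerivAt_pow 2 s
      norm_num at h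
      simpa [mul_comm] using h
    exact hnum.div hden (by positivity)
  have hmono : MonotoneOn (fun s : ℝ => (Real.exp s - 1 - s) / s ^ 2) (Set.Ioi 0) := by
    apply monotoneOn_of_deriv_nonneg (convex_Ioi 0)
    · apply ContinuousOn.div (by fun_prop) (by fun_prop)
      intro s hs
      rw [Set.mem_Ioi] at hs
      positivity
    · intro s hs
      exact ((hderiv s hs).differentiableAt).differentiableWithinAt
    · intro s hs
      rw [(hderiv s hs).deriv]
      rw [interior_Ioi, Set.mem_Ioi] at hs
      apply div_nonneg _ (by positivity)
      have hpsi := aux_psi_nonneg hs.le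
      nlinarith [hs.le]
  have h := hmono (Set.mem_Ioi.mpr ht) (Set.mem_Ioi.mpr hΓ) htΓ
  rw [div_le_div_iff₀ (by positivity) (by positivity)] at h
  linarith

lemma aux_chord {t Γ : ℝ} (ht : 0 ≤ t) (htΓ : t ≤ Γ) (hΓ : 0 < Γ) :
    t * (1 - Real.exp (-Γ)) ≤ Γ * (1 - Real.exp (-t)) := by
  have hne : Γ ≠ 0 := ne_of_gt hΓ
  have ha : (0:ℝ) ≤ (Γ - t)/Γ := div_nonneg (by linarith) hΓ.le
  have hb : (0:ℝ) ≤ t/Γ := div_nonneg ht hΓ.le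
  have hab : (Γ - t)/Γ + t/Γ = 1 := by field_simp; ring
  have h := convexOn_exp.2 (Set.mem_univ (0:ℝ)) (Set.mem_univ (-Γ)) ha hb hab
  simp only [smul_eq_mul, mul_zero, zero_add, Real.exp_zero, mul_one] at h
  have harg : t/Γ * (-Γ) = -t := by field_simp
  rw [harg] at h
  -- h : rexp (-t) ≤ (Γ - t)/Γ + t/Γ * rexp (-Γ)
  have h2 := mul_le_mul_of_nonneg_left h hΓ.le
  have h3 : Γ * ((Γ - t)/Γ + t/Γ * Real.exp (-Γ)) = (Γ - t) + t * Real.exp (-Γ) := by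
    field_simp
  rw [h3] at h2
  nlinarith [h2]

/-- For every `Γ > 0` and every real `x ≥ -Γ`,
`2(e^{|x|} - 1 - |x|) ≤ c_Γ² (e^x - 1)²`, where
`c_Γ = 2(e^Γ - 1 - Γ)/(e^{-Γ} - 1)²`. -/
theorem exp_abs_bound (Γ : ℝ) (hΓ : 0 < Γ) (x : ℝ) (hx : -Γ ≤ x) :
    2 * (Real.exp |x| - 1 - |x|) ≤
      (2 * (Real.exp Γ - 1 - Γ) / (Real.exp (-Γ) - 1) ^ 2) ^ 2 * (Real.exp x - 1) ^ 2 := by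
  set E := Real.exp Γ - 1 - Γ with hE_def
  set D := (Real.exp (-Γ) - 1) ^ 2 with hD_def
  have hexpΓ : Real.exp (-Γ) < 1 := by
    rw [Real.exp_lt_one_iff]; linarith
  have hD : 0 < D := by
    have h : Real.exp (-Γ) - 1 ≠ 0 := by linarith
    positivity
  have hE : 0 < E := by
    have := Real.add_one_lt_exp (ne_of_gt hΓ)
    simp only [hE_def]; linarith
  have hDE : D ≤ 2 * E := by
    have h1 : 1 - Γ ≤ Real.exp (-Γ) := by linarith [Real.add_one_le_exp (-Γ)]
    have h3 : 1 + Γ + Γ ^ 2 / 2 ≤ Real.exp Γ := Real.quadratic_le_exp_of_nonneg hΓ.le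
    simp only [hE_def, hD_def]
    nlinarith [Real.exp_pos (-Γ), sq_nonneg (Real.exp (-Γ) - 1 + Γ)]
  have hc1 : 1 ≤ 2 * E / D := by
    rw [le_div_iff₀ hD]; linarith
  rcases le_or_gt 0 x with hx0 | hx0
  · -- x ≥ 0
    rw [abs_of_nonneg hx0]
    have h1 := aux_sq_bound hx0
    have h2 : (1:ℝ) ≤ (2 * E / D) ^ 2 := by nlinarith [hc1]
    nlinarith [sq_nonneg (Real.exp x - 1), h1, h2]
  · -- x < 0
    obtain ⟨t, rfl⟩ : ∃ t, x = -t := ⟨-x, by ring⟩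
    have ht : 0 < t := by linarith
    have htΓ : t ≤ Γ := by linarith
    rw [abs_neg, abs_of_pos ht]
    have hratio := aux_ratio_le ht htΓ
    have hchord := aux_chord ht.le htΓ hΓ
    have hS : 0 ≤ 1 - Real.exp (-t) := by
      have h : Real.exp (-t) ≤ 1 := by rw [Real.exp_le_one_iff]; linarith
      linarith
    have hSΓ : 0 ≤ 1 - Real.exp (-Γ) := by linarith
    have hchord2 : t ^ 2 * (1 - Real.exp (-Γ)) ^ 2 ≤ Γ ^ 2 * (1 - Real.exp (-t)) ^ 2 := by
      nlinarith [mul_le_mul hchord hchord (by positivity) (by positivity)]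
    rw [div_pow, div_mul_eq_mul_div, le_div_iff₀ (by positivity : (0:ℝ) < D ^ 2)]
    -- goal : 2 * (rexp t - 1 - t) * D ^ 2 ≤ (2 * E) ^ 2 * (rexp (-t) - 1) ^ 2
    have hΓ2 : (0:ℝ) < Γ ^ 2 := by positivity
    have h1 := mul_le_mul_of_nonneg_right hratio
      (show (0:ℝ) ≤ 2 * D ^ 2 by positivity)
    have h2 := mul_le_mul_of_nonneg_right hchord2
      (mul_nonneg (mul_nonneg (by norm_num : (0:ℝ) ≤ 2) hE.le) hD.le)
    have h3 := mul_le_mul_of_nonneg_right hDE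
      (mul_nonneg (mul_nonneg (mul_nonneg (by norm_num : (0:ℝ) ≤ 2) hE.le) (sq_nonneg Γ))
        (sq_nonneg (1 - Real.exp (-t))))
    have hmain : 2 * (Real.exp t - 1 - t) * D ^ 2 * Γ ^ 2 ≤
        (2 * E) ^ 2 * (Real.exp (-t) - 1) ^ 2 * Γ ^ 2 := by
      calc 2 * (Real.exp t - 1 - t) * D ^ 2 * Γ ^ 2
          = (Real.exp t - 1 - t) * Γ ^ 2 * (2 * D ^ 2) := by ring
        _ ≤ (Real.exp Γ - 1 - Γ) * t ^ 2 * (2 * D ^ 2) := h1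
        _ = t ^ 2 * (1 - Real.exp (-Γ)) ^ 2 * (2 * E * D) := by
            rw [hE_def, hD_def]; ring
        _ ≤ Γ ^ 2 * (1 - Real.exp (-t)) ^ 2 * (2 * E * D) := h2
        _ = D * (2 * E * Γ ^ 2 * (1 - Real.exp (-t)) ^ 2) := by ring
        _ ≤ 2 * E * (2 * E * Γ ^ 2 * (1 - Real.exp (-t)) ^ 2) := h3
        _ = (2 * E) ^ 2 * (Real.exp (-t) - 1) ^ 2 * Γ ^ 2 := by ring
    exact le_of_mul_le_mul_right hmain hΓ2
end
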